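/- Let r > 0, α ∈ ℝ with sin(πα/2) ≠ 0, and x₀ ∈ ℝ. Write u(f) = √r·∑_{k∈ℤ} (𝓕^α f)(rk) for the pairing of 𝓕^α Ш_r against a Schwartz function f, and say that u is even (respectively odd) about x₀ if u(x ↦ f(2x₀ − x)) = u(f) (respectively = −u(f)) for every Schwartz function f. Then u is even or odd about x₀ if and only if there exist integers m, n with 2·x₀·cos(πα/2) = r·m and 2·x₀·sin(πα/2) = n/r; and when such m, n exist, u is even about x₀ if m·n is even, and odd about x₀ if m·n is odd. -/

import Mathlib

/-!
Reflecting `f` about `x₀` turns `𝓕^α f (x)` into a unimodular phase times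
`𝓕^α f (2x₀cos(πα/2) - x)`, so `u (f (2x₀ - ·))` is a comb over the reflected lattice
`2x₀cos(πα/2) - rℤ` with that phase as weights. When `2x₀cos(πα/2) = rm` and `2x₀sin(πα/2) = n/r`,
the reflected lattice is `rℤ` and the phase at `rk` is `(-1)^{mn}`.

Conversely, `𝓕^α` is a chirp multiplication, a Fourier transform and a dilation, hence maps Schwartz
space onto itself. So `u (f (2x₀ - ·)) = ±u (f)` compares the two weighted combs against every
Schwartz function, and narrow bumps force the reflected lattice to be `rℤ` and the phase to be
constant along it, which produces `m` and `n`.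
-/

open MeasureTheory

/-- The fractional Fourier transform of a function `f : ℝ → ℂ`, for `α` with
`sin (πα/2) ≠ 0`. -/
noncomputable def frFT (α : ℝ) (f : ℝ → ℂ) (x : ℝ) : ℂ :=
  (Complex.I * (Real.sin (Real.pi * α / 2) : ℂ)) ^ (-(1/2) : ℂ) *
    ∫ y : ℝ, Complex.exp ((Real.pi : ℂ) * Complex.I / (Real.sin (Real.pi * α / 2) : ℂ) *
      ((Real.cos (Real.pi * α / 2) * (x ^ 2 + y ^ 2) - 2 * x * y : ℝ) : ℂ)) * f y

/-- The pairing `⟨𝓕^α Ш_r, f⟩ = √r · ∑_{k ∈ ℤ} (𝓕^α f)(rk)`. -/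
noncomputable def frftCombPair (r α : ℝ) (f : ℝ → ℂ) : ℂ :=
  (Real.sqrt r : ℂ) * ∑' k : ℤ, frFT α f (r * k)

open Complex SchwartzMap FourierTransform
open scoped Real

noncomputable def chirp (a y : ℝ) : ℂ := cexp (↑(a * y ^ 2) * I)

lemma iteratedDeriv_cexp_ofReal_mul_I (n : ℕ) :
    iteratedDeriv n (fun t : ℝ => cexp (t * I)) = fun t : ℝ => I ^ n * cexp (t * I) := by
  induction n with
  | zero => simp
  | succ n ih =>
    rw [iteratedDeriv_succ, ih]
    ext t
    have := (((hasDerivAt_id (t : ℂ)).mul_const I).cexp.comp_ofReal).const_mul (I ^ n)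
    simp only [id_eq, one_mul] at this
    rw [this.deriv]; ring

lemma hasTemperateGrowth_cexp_ofReal_mul_I :
    (fun t : ℝ => cexp (t * I)).HasTemperateGrowth := by
  refine ⟨(ofRealCLM.contDiff.mul contDiff_const).cexp, fun n => ⟨0, 1, fun t => ?_⟩⟩
  rw [norm_iteratedFDeriv_eq_norm_iteratedDeriv, iteratedDeriv_cexp_ofReal_mul_I]
  simp [norm_exp_ofReal_mul_I]

lemma chirp_hasTemperateGrowth (a : ℝ) : (chirp a).HasTemperateGrowth :=
  hasTemperateGrowth_cexp_ofReal_mul_I.comp (f := fun y => a * y ^ 2) (by fun_prop)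

lemma chirp_mul_chirp_neg (a y : ℝ) : chirp a y * chirp (-a) y = 1 := by
  simp [chirp, ← Complex.exp_add]

lemma exists_schwartzMap_bump {E : Type*} [NormedAddCommGroup E] [NormedSpace ℝ E]
    [FiniteDimensional ℝ E] (p : E) {δ : ℝ} (hδ : 0 < δ) :
    ∃ g : 𝓢(E, ℂ), g p = 1 ∧ ∀ x, δ ≤ dist x p → g x = 0 := by
  obtain ⟨B, rfl⟩ : ∃ B : ContDiffBump p, B.rOut = δ :=
    ⟨⟨δ / 2, δ, half_pos hδ, half_lt_self hδ⟩, rfl⟩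
  have hB : HasCompactSupport (fun x => (B x : ℂ)) := B.hasCompactSupport.comp_left ofReal_zero
  refine ⟨hB.toSchwartzMap (ofRealCLM.contDiff.comp B.contDiff), ?_, fun x hx => ?_⟩
  · change (B p : ℂ) = 1
    simp [B.one_of_mem_closedBall (Metric.mem_closedBall_self B.rIn_pos.le)]
  · change (B x : ℂ) = 0
    simp [B.zero_of_le_dist hx]

lemma frFT_eq_chirp_mul_fourier (α : ℝ) (f : ℝ → ℂ) (x : ℝ) :
    frFT α f x = (I * Real.sin (π * α / 2)) ^ (-(1 / 2) : ℂ) *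
      (chirp (π * Real.cos (π * α / 2) / Real.sin (π * α / 2)) x *
        𝓕 (fun y => chirp (π * Real.cos (π * α / 2) / Real.sin (π * α / 2)) y * f y)
          (x / Real.sin (π * α / 2))) := by
  rw [frFT, Real.fourier_real_eq_integral_exp_smul, ← integral_const_mul (chirp _ x)]
  congr 1
  congr 1 with y
  simp only [chirp, smul_eq_mul, ← mul_assoc, ← Complex.exp_add]
  congr 2
  push_cast
  field_simp
  ring

lemma frFT_surjective {α : ℝ} (hs : Real.sin (π * α / 2) ≠ 0) (g : 𝓢(ℝ, ℂ)) :
    ∃ f : 𝓢(ℝ, ℂ), frFT α f = g := by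
  set s := Real.sin (π * α / 2)
  set C := (I * s) ^ (-(1 / 2) : ℂ)
  set a := π * Real.cos (π * α / 2) / s
  have hC : C ≠ 0 := cpow_ne_zero_iff.2 (Or.inl (mul_ne_zero I_ne_zero (ofReal_ne_zero.2 hs)))
  let L : ℝ ≃L[ℝ] ℝ := ContinuousLinearEquiv.unitsEquivAut ℝ (Units.mk0 s hs)
  let h : 𝓢(ℝ, ℂ) := C⁻¹ • compCLMOfContinuousLinearEquiv ℂ L (smulLeftCLM ℂ (chirp (-a)) g)
  -- Undo the three factors of `frFT_eq_chirp_mul_fourier` in reverse order.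
  refine ⟨smulLeftCLM ℂ (chirp (-a)) (𝓕⁻ h), funext fun x => ?_⟩
  have hF : 𝓕 (fun y => chirp a y * smulLeftCLM ℂ (chirp (-a)) (𝓕⁻ h) y) = h := by
    simp only [smulLeftCLM_apply_apply (chirp_hasTemperateGrowth _), smul_eq_mul, ← mul_assoc,
      chirp_mul_chirp_neg, one_mul, ← fourier_coe, fourier_fourierInv_eq]
  rw [frFT_eq_chirp_mul_fourier, hF]
  have hh : h (x / s) = C⁻¹ * (chirp (-a) x * g x) := by
    simp [h, L, smulLeftCLM_apply_apply (chirp_hasTemperateGrowth _), div_mul_cancel₀ _ hs]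
  rw [hh]
  linear_combination (g x) * (mul_inv_cancel₀ hC) + C * C⁻¹ * g x * chirp_mul_chirp_neg a x

lemma frFT_comp_reflect (α : ℝ) (f : ℝ → ℂ) (x₀ x : ℝ) :
    frFT α (fun y => f (2 * x₀ - y)) x =
      cexp (↑(4 * π * Real.sin (π * α / 2) * x₀ * (Real.cos (π * α / 2) * x₀ - x)) * I) *
        frFT α f (2 * Real.cos (π * α / 2) * x₀ - x) := by
  rw [frFT, frFT, ← integral_sub_left_eq_self _ volume (2 * x₀),
    mul_left_comm (cexp _), ← integral_const_mul (cexp _)]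
  congr 1
  congr 1 with y
  rw [sub_sub_cancel, ← mul_assoc, ← Complex.exp_add]
  congr 2
  have hsc := Real.sin_sq_add_cos_sq (π * α / 2)
  generalize Real.sin (π * α / 2) = s at hsc ⊢
  generalize Real.cos (π * α / 2) = c at hsc ⊢
  have hsc' : (s : ℂ) ^ 2 + (c : ℂ) ^ 2 = 1 := by exact_mod_cast hsc
  rcases eq_or_ne (s : ℂ) 0 with hs | hs
  · simp [hs]
  push_cast
  field_simp
  linear_combination (-4 * x₀ * (c * x₀ - x)) * hsc'

lemma le_dist_mul_intCast {r : ℝ} (hr : 0 ≤ r) {j k : ℤ} (hjk : j ≠ k) :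
    r ≤ dist (r * j) (r * k) := by
  rw [Real.dist_eq, ← mul_sub, abs_mul, abs_of_nonneg hr]
  refine le_mul_of_one_le_right hr ?_
  exact_mod_cast Int.one_le_abs (sub_ne_zero.2 hjk)

lemma exists_int_eq_mul_of_forall_tsum_mul_eq {r a : ℝ} (hr : 0 < r) {φ : ℤ → ℂ} {ε : ℂ}
    (hε : ε ≠ 0)
    (h : ∀ g : 𝓢(ℝ, ℂ), ∑' k : ℤ, φ k * g (a - r * k) = ε * ∑' k : ℤ, g (r * k)) :
    ∃ m : ℤ, a = r * m := by
  by_contra! ha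
  set t := a / r
  have ht : t - round t ≠ 0 := fun h0 =>
    ha (round t) (by rw [← sub_eq_zero.1 h0, mul_div_cancel₀ _ hr.ne'])
  -- `δ` is the distance from `0` to the reflected lattice `a - rℤ`, and `δ ≤ r / 2`.
  set δ := r * |t - round t|
  have hδ : 0 < δ := by positivity
  obtain ⟨g, hg0, hg⟩ := exists_schwartzMap_bump (0 : ℝ) hδ
  have hlattice : ∀ k : ℤ, k ≠ 0 → δ ≤ dist (r * k) 0 := fun k hk =>
    calc δ ≤ r * (1 / 2) := mul_le_mul_of_nonneg_left (abs_sub_round t) hr.le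
      _ ≤ r := by linarith
      _ ≤ dist (r * k) (r * (0 : ℤ)) := le_dist_mul_intCast hr.le hk
      _ = dist (r * k) 0 := by simp
  have hreflected : ∀ k : ℤ, δ ≤ dist (a - r * k) 0 := fun k => by
    rw [Real.dist_eq, sub_zero, show a - r * k = r * (t - k) by
      rw [mul_sub, mul_div_cancel₀ _ hr.ne'], abs_mul, abs_of_pos hr]
    exact mul_le_mul_of_nonneg_left (round_le t k) hr.le
  have := h g
  rw [tsum_eq_single 0 fun k hk => hg _ (hlattice k hk)] at this
  simp only [hg _ (hreflected _), mul_zero, tsum_zero, Int.cast_zero, hg0, mul_one] at this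
  exact hε this.symm

lemma eq_of_forall_tsum_mul_eq {r : ℝ} (hr : 0 < r) {m : ℤ} {φ : ℤ → ℂ} {ε : ℂ}
    (h : ∀ g : 𝓢(ℝ, ℂ), ∑' k : ℤ, φ k * g (r * m - r * k) = ε * ∑' k : ℤ, g (r * k))
    (k : ℤ) : φ k = ε := by
  obtain ⟨g, hg1, hg⟩ := exists_schwartzMap_bump (r * m - r * k) hr
  have := h g
  rw [tsum_eq_single k fun j hj => by
      rw [hg _ (by rw [dist_sub_left]; exact le_dist_mul_intCast hr.le hj), mul_zero],
    tsum_eq_single (m - k) fun j hj => hg _ (by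
      rw [show r * m - r * k = r * ((m - k : ℤ) : ℝ) by push_cast; ring]
      exact le_dist_mul_intCast hr.le hj)] at this
  simpa [hg1, mul_sub] using this

lemma frftCombPair_comp_reflect (r α x₀ : ℝ) (f : ℝ → ℂ) :
    frftCombPair r α (fun x => f (2 * x₀ - x)) = (Real.sqrt r : ℂ) *
      ∑' k : ℤ,
        cexp (↑(4 * π * Real.sin (π * α / 2) * x₀ * (Real.cos (π * α / 2) * x₀ - r * k)) * I) *
          frFT α f (2 * Real.cos (π * α / 2) * x₀ - r * k) := by
  simp only [frftCombPair, frFT_comp_reflect]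

lemma frftCombPair_comp_reflect_eq_neg_one_zpow {r α x₀ : ℝ} (hr : r ≠ 0) {m n : ℤ}
    (hm : 2 * x₀ * Real.cos (π * α / 2) = r * m) (hn : 2 * x₀ * Real.sin (π * α / 2) = n / r)
    (f : ℝ → ℂ) :
    frftCombPair r α (fun x => f (2 * x₀ - x)) = (-1) ^ (m * n) * frftCombPair r α f := by
  have hn' : 2 * x₀ * Real.sin (π * α / 2) * r = n := by rw [hn, div_mul_cancel₀ _ hr]
  have hphase : ∀ k : ℤ, cexp (↑(4 * π * Real.sin (π * α / 2) * x₀ *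
      (Real.cos (π * α / 2) * x₀ - r * k)) * I) = (-1) ^ (m * n) := fun k => by
    rw [show 4 * π * Real.sin (π * α / 2) * x₀ * (Real.cos (π * α / 2) * x₀ - r * k) =
        π * (m * n - 2 * n * k) by
      linear_combination (2 * π * x₀ * Real.sin (π * α / 2)) * hm + (π * (m - 2 * k)) * hn',
      show (↑(π * (m * n - 2 * n * k)) * I : ℂ) =
          (m * n : ℤ) * (π * I) + (-(n * k) : ℤ) * (2 * π * I) by push_cast; ring,
      Complex.exp_add, Complex.exp_int_mul, Complex.exp_pi_mul_I,
      Complex.exp_int_mul_two_pi_mul_I, mul_one]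
  have hpoint : ∀ k : ℤ, 2 * Real.cos (π * α / 2) * x₀ - r * k = r * ↑(m - k) := fun k => by
    push_cast; linarith
  have hreindex := (Equiv.subLeft m).tsum_eq (fun k : ℤ => frFT α f (r * k))
  simp only [Equiv.subLeft_apply] at hreindex
  rw [frftCombPair_comp_reflect, frftCombPair]
  simp_rw [hphase, hpoint, tsum_mul_left]
  rw [hreindex]
  ring

lemma frftCombPair_comp_reflect_of_even {r α x₀ : ℝ} (hr : r ≠ 0) {m n : ℤ}
    (hm : 2 * x₀ * Real.cos (π * α / 2) = r * m) (hn : 2 * x₀ * Real.sin (π * α / 2) = n / r)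
    (hmn : Even (m * n)) (f : ℝ → ℂ) :
    frftCombPair r α (fun x => f (2 * x₀ - x)) = frftCombPair r α f := by
  rw [frftCombPair_comp_reflect_eq_neg_one_zpow hr hm hn, hmn.neg_one_zpow, one_mul]

lemma frftCombPair_comp_reflect_of_odd {r α x₀ : ℝ} (hr : r ≠ 0) {m n : ℤ}
    (hm : 2 * x₀ * Real.cos (π * α / 2) = r * m) (hn : 2 * x₀ * Real.sin (π * α / 2) = n / r)
    (hmn : Odd (m * n)) (f : ℝ → ℂ) :
    frftCombPair r α (fun x => f (2 * x₀ - x)) = -frftCombPair r α f := by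
  rw [frftCombPair_comp_reflect_eq_neg_one_zpow hr hm hn, hmn.neg_one_zpow, neg_one_mul]

lemma exists_int_of_frftCombPair_comp_reflect_eq_mul {r α x₀ : ℝ} (hr : 0 < r)
    (hs : Real.sin (π * α / 2) ≠ 0) {ε : ℂ} (hε : ε ≠ 0)
    (h : ∀ f : 𝓢(ℝ, ℂ), frftCombPair r α (fun x => f (2 * x₀ - x)) = ε * frftCombPair r α f) :
    ∃ m n : ℤ, 2 * x₀ * Real.cos (π * α / 2) = r * m ∧ 2 * x₀ * Real.sin (π * α / 2) = n / r := by
  set φ : ℤ → ℂ := fun k =>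
    cexp (↑(4 * π * Real.sin (π * α / 2) * x₀ * (Real.cos (π * α / 2) * x₀ - r * k)) * I)
  have hcomb : ∀ g : 𝓢(ℝ, ℂ),
      ∑' k : ℤ, φ k * g (2 * Real.cos (π * α / 2) * x₀ - r * k) = ε * ∑' k : ℤ, g (r * k) := by
    intro g
    obtain ⟨f, hf⟩ := frFT_surjective hs g
    have := h f
    rw [frftCombPair_comp_reflect, frftCombPair, hf, mul_left_comm] at this
    exact mul_left_cancel₀ (by simpa using (Real.sqrt_pos.2 hr).ne') this
  obtain ⟨m, hm⟩ := exists_int_eq_mul_of_forall_tsum_mul_eq hr hε hcomb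
  rw [hm] at hcomb
  have hφ := eq_of_forall_tsum_mul_eq hr hcomb
  obtain ⟨n, hn⟩ := Complex.exp_eq_exp_iff_exists_int.1 ((hφ 0).trans (hφ 1).symm)
  refine ⟨m, n, by linarith, ?_⟩
  generalize Real.sin (π * α / 2) = s at hn ⊢
  have hreal : 2 * π * (2 * x₀ * s * r) = 2 * π * n := by
    apply ofReal_injective
    apply mul_right_cancel₀ I_ne_zero
    push_cast at hn ⊢
    linear_combination hn
  rw [eq_div_iff hr.ne']
  exact mul_left_cancel₀ (by positivity) hreal

/-- Parity of `𝓕^α Ш_r` about a point `x₀`: it is even or odd about `x₀` iff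
`2x₀cos(πα/2) = rm` and `2x₀sin(πα/2) = n/r` for integers `m, n`; even when `mn` is even
and odd when `mn` is odd. -/
theorem stmt15 (r α x₀ : ℝ) (hr : 0 < r) (hsin : Real.sin (Real.pi * α / 2) ≠ 0) :
    (((∀ f : SchwartzMap ℝ ℂ,
          frftCombPair r α (fun x => f (2 * x₀ - x)) = frftCombPair r α (⇑f)) ∨
       (∀ f : SchwartzMap ℝ ℂ,
          frftCombPair r α (fun x => f (2 * x₀ - x)) = -frftCombPair r α (⇑f)))
      ↔ (∃ m n : ℤ, 2 * x₀ * Real.cos (Real.pi * α / 2) = r * m ∧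
          2 * x₀ * Real.sin (Real.pi * α / 2) = n / r)) ∧
    (∀ m n : ℤ, 2 * x₀ * Real.cos (Real.pi * α / 2) = r * m →
        2 * x₀ * Real.sin (Real.pi * α / 2) = n / r →
      (Even (m * n) → ∀ f : SchwartzMap ℝ ℂ,
          frftCombPair r α (fun x => f (2 * x₀ - x)) = frftCombPair r α (⇑f)) ∧
      (Odd (m * n) → ∀ f : SchwartzMap ℝ ℂ,
          frftCombPair r α (fun x => f (2 * x₀ - x)) = -frftCombPair r α (⇑f))) := by
  refine ⟨⟨?_, ?_⟩, fun m n hm hn =>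
    ⟨fun he f => frftCombPair_comp_reflect_of_even hr.ne' hm hn he f,
      fun ho f => frftCombPair_comp_reflect_of_odd hr.ne' hm hn ho f⟩⟩
  · rintro (h | h)
    · exact exists_int_of_frftCombPair_comp_reflect_eq_mul hr hsin one_ne_zero (by simpa using h)
    · exact exists_int_of_frftCombPair_comp_reflect_eq_mul hr hsin (neg_ne_zero.2 one_ne_zero)
        (by simpa using h)
  · rintro ⟨m, n, hm, hn⟩
    rcases Int.even_or_odd (m * n) with he | ho
    · exact Or.inl (frftCombPair_comp_reflect_of_even hr.ne' hm hn he ·)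
    · exact Or.inr (frftCombPair_comp_reflect_of_odd hr.ne' hm hn ho ·)
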